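/- Define u₀(t) = t and u_{k+1}(t) = 2^{u_k(t)} − 1. Then for every t ∈ (0,1), the series ∑_{k=0}^∞ u_k(t) converges. -/

import Mathlib

noncomputable def u : ℕ → ℝ → ℝ
  | 0, t => t
  | k + 1, t => (2:ℝ) ^ (u k t) - 1

/-!
The map `x ↦ 2 ^ x - 1` is convex and vanishes at `0`, so on `[0, t]` it lies below its chord
`x ↦ r x` with `r = (2 ^ t - 1) / t`, and Bernoulli's inequality gives `r < 1` for `0 < t < 1`.
Since the orbit `u k t` decreases and stays in `[0, t]`, each term is at most `r` times the
previous one, and the ratio test applies.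
-/

open Real Set Filter

lemma ConvexOn.le_div_mul_of_map_zero {s : Set ℝ} {f : ℝ → ℝ} (hf : ConvexOn ℝ s f)
    (h0 : 0 ∈ s) (hf0 : f 0 = 0) {a x : ℝ} (ha : a ∈ s) (hx : x ∈ s) (hx0 : 0 ≤ x)
    (hxa : x ≤ a) : f x ≤ f a / a * x := by
  rcases hx0.eq_or_lt with rfl | hx0
  · simp [hf0]
  have hslope := hf.secant_mono h0 hx ha hx0.ne' (hx0.trans_le hxa).ne' hxa
  simp only [hf0, sub_zero] at hslope
  rwa [div_le_iff₀ hx0] at hslope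

lemma two_rpow_sub_one_nonneg {x : ℝ} (hx : 0 ≤ x) : 0 ≤ (2:ℝ) ^ x - 1 :=
  sub_nonneg.2 (one_le_rpow one_le_two hx)

lemma two_rpow_sub_one_le_self {x : ℝ} (hx0 : 0 ≤ x) (hx1 : x ≤ 1) : (2:ℝ) ^ x - 1 ≤ x := by
  have h := rpow_one_add_le_one_add_mul_self (s := 1) (by norm_num) hx0 hx1
  rw [one_add_one_eq_two, mul_one] at h
  linarith

lemma two_rpow_sub_one_lt_self {x : ℝ} (hx0 : 0 < x) (hx1 : x < 1) : (2:ℝ) ^ x - 1 < x := by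
  have h := rpow_one_add_lt_one_add_mul_self (s := 1) (by norm_num) one_ne_zero hx0 hx1
  rw [one_add_one_eq_two, mul_one] at h
  linarith

lemma two_rpow_sub_one_le_div_mul {a x : ℝ} (hx0 : 0 ≤ x) (hxa : x ≤ a) :
    (2:ℝ) ^ x - 1 ≤ ((2:ℝ) ^ a - 1) / a * x := by
  have hconv : ConvexOn ℝ univ (fun x : ℝ => (2:ℝ) ^ x - 1) :=
    (convexOn_rpow_left two_pos).add_const (-1)
  exact hconv.le_div_mul_of_map_zero (mem_univ 0) (by simp) (mem_univ a) (mem_univ x) hx0 hxa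

lemma u_succ (k : ℕ) (t : ℝ) : u (k + 1) t = (2:ℝ) ^ u k t - 1 := rfl

lemma u_mem_Icc {t : ℝ} (ht0 : 0 ≤ t) (ht1 : t ≤ 1) (k : ℕ) : u k t ∈ Icc 0 t := by
  induction k with
  | zero => exact ⟨ht0, le_rfl⟩
  | succ k ih =>
    rw [u_succ]
    exact ⟨two_rpow_sub_one_nonneg ih.1,
      (two_rpow_sub_one_le_self ih.1 (ih.2.trans ht1)).trans ih.2⟩

lemma u_succ_le_div_mul {t : ℝ} (ht0 : 0 ≤ t) (ht1 : t ≤ 1) (k : ℕ) :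
    u (k + 1) t ≤ ((2:ℝ) ^ t - 1) / t * u k t :=
  two_rpow_sub_one_le_div_mul (u_mem_Icc ht0 ht1 k).1 (u_mem_Icc ht0 ht1 k).2

theorem stmt8 (t : ℝ) (ht : t ∈ Set.Ioo (0:ℝ) 1) :
    Summable (fun k : ℕ => u k t) := by
  obtain ⟨ht0, ht1⟩ := ht
  have hratio : ((2:ℝ) ^ t - 1) / t < 1 := (div_lt_one ht0).2 (two_rpow_sub_one_lt_self ht0 ht1)
  refine summable_of_ratio_norm_eventually_le hratio (Eventually.of_forall fun k => ?_)
  rw [norm_of_nonneg (u_mem_Icc ht0.le ht1.le (k + 1)).1,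
    norm_of_nonneg (u_mem_Icc ht0.le ht1.le k).1]
  exact u_succ_le_div_mul ht0.le ht1.le k
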